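/- arXiv:1003.0569 — 3 statements merged into one kernel-verified Lean document; each statement's English description precedes it below -/
import Mathlib

section
/- Let X be a finite nonempty set, m a natural number, b ≥ 1 a natural number, and K : Fin m → X → ℕ with K j x < b for all j, x. Let L(x) = Σ_{j : Fin m} b^(m - 1 - j) * K j x. If x* ∈ X maximizes L over X (i.e. L(x*) ≥ L(y) for all y ∈ X), then x* is the best decision in the lexicographic procedure: for every y ∈ X, x* ≻_lex y or x* ~_lex y. -/
/-- Strict lexicographic preference for natural-number-valued criteria. -/
def LexPrefNat {X : Type*} {m : ℕ} (K : Fin m → X → ℕ) (x y : X) : Prop :=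
  ∃ j : Fin m, (∀ q : Fin m, q < j → K q x = K q y) ∧ K j x > K j y

/-- Lexicographic equivalence for natural-number-valued criteria. -/
def LexEquivNat {X : Type*} {m : ℕ} (K : Fin m → X → ℕ) (x y : X) : Prop :=
  ∀ j : Fin m, K j x = K j y

/-- Linear convolution with lexicographic importance coefficients `λ_j = b^(m-1-j)`. -/
def LexConv {X : Type*} {m : ℕ} (b : ℕ) (K : Fin m → X → ℕ) (x : X) : ℕ :=
  ∑ j : Fin m, b ^ (m - 1 - (j : ℕ)) * K j x

/-!
`LexConv b K x` is the base-`b` numeral whose digits, most significant first, are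
`K 0 x, …, K (m-1) x`. When the digits are below `b`, everything after a position weighs
less than one unit of that position, so numerals compare like their digit strings
lexicographically. Since the lexicographic order on digit strings is total, a decision that
is neither lexicographically worse than nor equivalent to a maximizer would beat it in `LexConv`.
-/

section LexConv

variable {X : Type*}

theorem lexPrefNat_iff_toLex_lt {m : ℕ} (K : Fin m → X → ℕ) (x y : X) :
    LexPrefNat K x y ↔ toLex (fun j => K j y) < toLex (fun j => K j x) :=
  exists_congr fun _ => and_congr (forall₂_congr fun _ _ => eq_comm) Iff.rfl

theorem lexPrefNat_or_lexEquivNat_or_lexPrefNat {m : ℕ} (K : Fin m → X → ℕ) (x y : X) :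
    LexPrefNat K x y ∨ LexEquivNat K x y ∨ LexPrefNat K y x := by
  rw [lexPrefNat_iff_toLex_lt, lexPrefNat_iff_toLex_lt]
  rcases lt_trichotomy (toLex fun j => K j y) (toLex fun j => K j x) with h | h | h
  · exact Or.inl h
  · exact Or.inr (Or.inl fun j => (congrFun h j).symm)
  · exact Or.inr (Or.inr h)

theorem lexConv_succ {m : ℕ} (b : ℕ) (K : Fin (m + 1) → X → ℕ) (x : X) :
    LexConv b K x = b ^ m * K 0 x + LexConv b (fun j => K j.succ) x := by
  simp only [LexConv, Fin.sum_univ_succ, Fin.val_zero, Fin.val_succ, Nat.add_sub_cancel,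
    Nat.sub_zero, Nat.sub_sub, Nat.add_comm 1]

theorem lexConv_lt_pow {m b : ℕ} (K : Fin m → X → ℕ) (x : X) (hK : ∀ j, K j x < b) :
    LexConv b K x < b ^ m := by
  induction m with
  | zero => simp [LexConv]
  | succ m ih =>
    have htail := ih (fun j => K j.succ) fun j => hK j.succ
    calc LexConv b K x
        < b ^ m * K 0 x + b ^ m := by rw [lexConv_succ]; omega
      _ = b ^ m * (K 0 x + 1) := by ring
      _ ≤ b ^ m * b := Nat.mul_le_mul_left _ (hK 0)
      _ = b ^ (m + 1) := (pow_succ b m).symm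

theorem lexConv_lt_lexConv_of_lexPrefNat {m b : ℕ} (K : Fin m → X → ℕ) {x y : X}
    (hK : ∀ j, K j y < b) (h : LexPrefNat K x y) : LexConv b K y < LexConv b K x := by
  induction m with
  | zero => exact h.elim fun j _ => j.elim0
  | succ m ih =>
    obtain ⟨j, hsame, hgt⟩ := h
    rw [lexConv_succ, lexConv_succ]
    cases j using Fin.cases with
    | zero =>
      have htail := lexConv_lt_pow (fun j => K j.succ) y fun j => hK j.succ
      calc b ^ m * K 0 y + LexConv b (fun j => K j.succ) y
          < b ^ m * (K 0 y + 1) := by rw [Nat.mul_succ]; omega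
        _ ≤ b ^ m * K 0 x := Nat.mul_le_mul_left _ hgt
        _ ≤ _ := Nat.le_add_right _ _
    | succ j =>
      have htail : LexConv b (fun j => K j.succ) y < LexConv b (fun j => K j.succ) x :=
        ih _ (fun j => hK j.succ)
          ⟨j, fun q hq => hsame q.succ (Fin.succ_lt_succ_iff.mpr hq), hgt⟩
      rw [hsame 0 (Fin.succ_pos j)]
      omega

end LexConv

theorem lexConv_argmax_is_lex_best_general {X : Type*} {m : ℕ}
    {b : ℕ} (K : Fin m → X → ℕ)
    (hK : ∀ (j : Fin m) (x : X), K j x < b)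
    (xstar : X) (hmax : ∀ y : X, LexConv b K xstar ≥ LexConv b K y) :
    ∀ y : X, LexPrefNat K xstar y ∨ LexEquivNat K xstar y := by
  intro y
  rcases lexPrefNat_or_lexEquivNat_or_lexPrefNat K xstar y with h | h | h
  · exact Or.inl h
  · exact Or.inr h
  · exact absurd (hmax y) (not_le.mpr (lexConv_lt_lexConv_of_lexPrefNat K (hK · xstar) h))

/-- A maximizer of the linear convolution is the best decision in the lexicographic
procedure. -/
theorem lexConv_argmax_is_lex_best {X : Type*} [Fintype X] [Nonempty X] {m : ℕ}
    {b : ℕ} (hb : 1 ≤ b) (K : Fin m → X → ℕ)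
    (hK : ∀ (j : Fin m) (x : X), K j x < b)
    (xstar : X) (hmax : ∀ y : X, LexConv b K xstar ≥ LexConv b K y) :
    ∀ y : X, LexPrefNat K xstar y ∨ LexEquivNat K xstar y :=
  lexConv_argmax_is_lex_best_general K hK xstar hmax
end

section
/- Let X be a set, m a natural number, and μ : Fin m → X → X → ℝ a family of fuzzy preference relations with 0 ≤ μ j x y ≤ 1 for all j, x, y. Define μˢ j x y = max (μ j x y - μ j y x) 0, and the fuzzy strict lexicographic preference: x ≻_flex y iff there exists j : Fin m such that μˢ q x y = 0 and μˢ q y x = 0 for all q < j, and μˢ j x y > 0. Then for all x, y ∈ X exactly one of the following holds: x ≻_flex y, or y ≻_flex x, or (μˢ j x y = 0 and μˢ j y x = 0 for all j : Fin m), i.e. x and y are lexicographically equivalent. -/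
/-- Fuzzy attitude of superiority (fuzzy strict part) of a fuzzy preference relation. -/
def FuzzyStrict {X : Type*} {m : ℕ} (μ : Fin m → X → X → ℝ) (j : Fin m) (x y : X) : ℝ :=
  max (μ j x y - μ j y x) 0

/-- Fuzzy strict lexicographic preference. -/
def FLexPref {X : Type*} {m : ℕ} (μ : Fin m → X → X → ℝ) (x y : X) : Prop :=
  ∃ j : Fin m,
    (∀ q : Fin m, q < j → FuzzyStrict μ q x y = 0 ∧ FuzzyStrict μ q y x = 0) ∧
    FuzzyStrict μ j x y > 0

/-- Fuzzy lexicographic equivalence. -/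
def FLexEquiv {X : Type*} {m : ℕ} (μ : Fin m → X → X → ℝ) (x y : X) : Prop :=
  ∀ j : Fin m, FuzzyStrict μ j x y = 0 ∧ FuzzyStrict μ j y x = 0

/-!
`x ≻_flex y` says exactly that the vector `(μ j x y)_j` exceeds `(μ j y x)_j` in the
lexicographic order on `Fin m → ℝ`, and lexicographic equivalence says that the two vectors
coincide. That order is linear because `Fin m` is well-ordered, and the theorem is its
trichotomy.
-/

namespace FuzzyStrict

variable {X : Type*} {m : ℕ} (μ : Fin m → X → X → ℝ) (j : Fin m) (x y : X)

theorem pos_iff : 0 < FuzzyStrict μ j x y ↔ μ j y x < μ j x y := by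
  simp [FuzzyStrict]

theorem eq_zero_iff : FuzzyStrict μ j x y = 0 ↔ μ j x y ≤ μ j y x := by
  simp [FuzzyStrict]

theorem eq_zero_and_swap_eq_zero_iff :
    FuzzyStrict μ j x y = 0 ∧ FuzzyStrict μ j y x = 0 ↔ μ j x y = μ j y x := by
  rw [eq_zero_iff, eq_zero_iff, le_antisymm_iff]

end FuzzyStrict

def lexProfile {X : Type*} {m : ℕ} (μ : Fin m → X → X → ℝ) (x y : X) : Lex (Fin m → ℝ) :=
  toLex fun j => μ j x y

section

variable {X : Type*} {m : ℕ} (μ : Fin m → X → X → ℝ) (x y : X)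

theorem fLexPref_iff_lexProfile_lt : FLexPref μ x y ↔ lexProfile μ y x < lexProfile μ x y := by
  simp only [FLexPref, FuzzyStrict.eq_zero_and_swap_eq_zero_iff, gt_iff_lt, FuzzyStrict.pos_iff]
  exact exists_congr fun j => and_congr_left' <| forall₂_congr fun q _ => eq_comm

theorem fLexEquiv_iff_lexProfile_eq : FLexEquiv μ x y ↔ lexProfile μ x y = lexProfile μ y x := by
  simp only [FLexEquiv, FuzzyStrict.eq_zero_and_swap_eq_zero_iff, lexProfile, toLex_inj,
    funext_iff]

end

theorem fLexPref_linked_general {X : Type*} {m : ℕ} (μ : Fin m → X → X → ℝ) :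
    ∀ x y : X,
      (FLexPref μ x y ∧ ¬ FLexPref μ y x ∧ ¬ FLexEquiv μ x y) ∨
      (¬ FLexPref μ x y ∧ FLexPref μ y x ∧ ¬ FLexEquiv μ x y) ∨
      (¬ FLexPref μ x y ∧ ¬ FLexPref μ y x ∧ FLexEquiv μ x y) := by
  intro x y
  simp only [fLexPref_iff_lexProfile_lt, fLexEquiv_iff_lexProfile_eq]
  rcases lt_trichotomy (lexProfile μ y x) (lexProfile μ x y) with h | h | h
  · exact Or.inl ⟨h, h.not_gt, h.ne'⟩
  · exact Or.inr (Or.inr ⟨h.not_lt, h.not_gt, h.symm⟩)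
  · exact Or.inr (Or.inl ⟨h.not_gt, h, h.ne⟩)

/-- The fuzzy lexicographic preference is linked: for any two decisions exactly one of
`x ≻_flex y`, `y ≻_flex x`, or fuzzy lexicographic equivalence holds. -/
theorem fLexPref_linked {X : Type*} {m : ℕ} (μ : Fin m → X → X → ℝ)
    (hμ : ∀ (j : Fin m) (x y : X), 0 ≤ μ j x y ∧ μ j x y ≤ 1) :
    ∀ x y : X,
      (FLexPref μ x y ∧ ¬ FLexPref μ y x ∧ ¬ FLexEquiv μ x y) ∨
      (¬ FLexPref μ x y ∧ FLexPref μ y x ∧ ¬ FLexEquiv μ x y) ∨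
      (¬ FLexPref μ x y ∧ ¬ FLexPref μ y x ∧ FLexEquiv μ x y) :=
  fLexPref_linked_general μ
end

section
/- Let X be a set, m a natural number, and μ : Fin m → X → X → ℝ a family of fuzzy preference relations with 0 ≤ μ j x y ≤ 1 for all j, x, y. With μˢ j x y = max (μ j x y - μ j y x) 0 and the fuzzy strict lexicographic preference ≻_flex defined as stated, ≻_flex is asymmetric: for all x, y ∈ X, if x ≻_flex y then not y ≻_flex x. -/
section FuzzyStrict

variable {X : Type*} {m : ℕ} (μ : Fin m → X → X → ℝ) (j : Fin m) {x y : X}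

theorem fuzzyStrict_pos_iff : 0 < FuzzyStrict μ j x y ↔ μ j y x < μ j x y := by
  simp [FuzzyStrict]

theorem fuzzyStrict_eq_zero_of_pos (h : 0 < FuzzyStrict μ j x y) :
    FuzzyStrict μ j y x = 0 :=
  max_eq_right (by linarith [(fuzzyStrict_pos_iff μ j).1 h])

end FuzzyStrict

theorem fLexPref_asymmetric_general {X : Type*} {m : ℕ} (μ : Fin m → X → X → ℝ) :
    ∀ x y : X, FLexPref μ x y → ¬ FLexPref μ y x := by
  rintro x y ⟨j, hj_below, hj⟩ ⟨k, hk_below, hk⟩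
  rcases lt_trichotomy j k with hjk | rfl | hkj
  · exact hj.ne' (hk_below j hjk).2
  · exact hk.ne' (fuzzyStrict_eq_zero_of_pos μ j hj)
  · exact hk.ne' (hj_below k hkj).2

/-- The fuzzy strict lexicographic preference is asymmetric. -/
theorem fLexPref_asymmetric {X : Type*} {m : ℕ} (μ : Fin m → X → X → ℝ)
    (hμ : ∀ (j : Fin m) (x y : X), 0 ≤ μ j x y ∧ μ j x y ≤ 1) :
    ∀ x y : X, FLexPref μ x y → ¬ FLexPref μ y x :=
  fLexPref_asymmetric_general μ
end
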